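/- arXiv:1910.08511 — 2 statements merged into one kernel-verified Lean document; each statement's English description precedes it below -/
import Mathlib

section
/- Let (X_{ij})_{i,j∈ℤ} be a stationary m-dependent random field that is regularly varying with index α∈[2,4). Fix β with 4/(3α) < β < 2(8−α)/(α(10−α)), η with 2/3 < η < 1 and η > αβ−1, and κ > η, and set ε̃_n := b_n^{(κ−1)/2}. Then, as n→∞: (i) ℙ(there exist 1≤i,j,k≤k_n with j≠k such that ‖B̂_{ij}‖_max>ε̃_n and ‖B̂_{ik}‖_max>ε̃_n) → 0; and (ii) ℙ(there exists 1≤i≤k_n such that ‖B̂_{ii}‖_max>ε̃_n) → 0. -/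
open MeasureTheory ProbabilityTheory Filter Matrix

noncomputable section

/-- A real-valued random field indexed by `ℤ × ℤ` is stationary if its finite-dimensional
distributions are invariant under all shifts of `ℤ²`. -/
def IsStationaryField {Ω : Type*} [MeasurableSpace Ω] (μ : Measure Ω)
    (X : ℤ × ℤ → Ω → ℝ) : Prop :=
  ∀ a b : ℤ,
    Measure.map (fun ω => fun p : ℤ × ℤ => X (p.1 + a, p.2 + b) ω) μ =
      Measure.map (fun ω => fun p : ℤ × ℤ => X p ω) μ

/-- A random field `X` is `m`-dependent if any two subfamilies whose index sets are separated
by a (sup-)distance greater than `m` are independent. -/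
def IsMDependent {Ω : Type*} [MeasurableSpace Ω] (μ : Measure Ω)
    (X : ℤ × ℤ → Ω → ℝ) (m : ℕ) : Prop :=
  ∀ A B : Set (ℤ × ℤ),
    (∀ p ∈ A, ∀ q ∈ B, (m : ℤ) < max |p.1 - q.1| |p.2 - q.2|) →
    IndepFun (fun ω => fun p : A => X p.1 ω) (fun ω => fun q : B => X q.1 ω) μ

/-- A positive function is slowly varying if `L (c x) / L x → 1` as `x → ∞` for every `c > 0`. -/
def SlowlyVarying (L : ℝ → ℝ) : Prop :=
  (∀ x : ℝ, 0 < x → 0 < L x) ∧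
    ∀ c : ℝ, 0 < c → Tendsto (fun x => L (c * x) / L x) atTop (nhds 1)

/-- The field is regularly varying with index `α`: `ℙ(|X₀₀| > x) = x^(-α) L(x)`
for a slowly varying `L`. -/
def IsRegVarying {Ω : Type*} [MeasurableSpace Ω] (μ : Measure Ω)
    (X : ℤ × ℤ → Ω → ℝ) (α : ℝ) : Prop :=
  ∃ L : ℝ → ℝ, SlowlyVarying L ∧
    ∀ x : ℝ, 0 < x → (μ {ω | x < |X (0, 0) ω|}).toReal = x ^ (-α) * L x

/-- The symmetrized field `X̂`. -/
def symX {Ω : Type*} (X : ℤ × ℤ → Ω → ℝ) (i j : ℤ) (ω : Ω) : ℝ :=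
  if i ≤ j then X (i, j) ω else X (j, i) ω

/-- `(a_n)` is a normalizing sequence: `a_n → ∞` and `n ℙ(|X₀₀| > a_n) → 1`. -/
def IsNormSeq {Ω : Type*} [MeasurableSpace Ω] (μ : Measure Ω)
    (X : ℤ × ℤ → Ω → ℝ) (a : ℕ → ℝ) : Prop :=
  Tendsto a atTop atTop ∧
    Tendsto (fun n : ℕ => (n : ℝ) * (μ {ω | a n < |X (0, 0) ω|}).toReal) atTop (nhds 1)

/-- The Wigner matrix `Â_n = (X̂_{ij} / b)_{1 ≤ i,j ≤ n}`. -/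
def wignerMat {Ω : Type*} (X : ℤ × ℤ → Ω → ℝ) (b : ℝ) (n : ℕ) (ω : Ω) :
    Matrix (Fin n) (Fin n) ℝ :=
  Matrix.of fun i j => symX X ((i : ℕ) + 1 : ℤ) ((j : ℕ) + 1 : ℤ) ω / b

/-- The `p × n` data matrix `A = (X_{ij} / c)_{1 ≤ i ≤ p, 1 ≤ j ≤ n}`. -/
def dataMat {Ω : Type*} (X : ℤ × ℤ → Ω → ℝ) (c : ℝ) (p n : ℕ) (ω : Ω) :
    Matrix (Fin p) (Fin n) ℝ :=
  Matrix.of fun i j => X (((i : ℕ) + 1 : ℤ), ((j : ℕ) + 1 : ℤ)) ω / c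

/-- Entrywise truncation keeping the entries of absolute value `> t` : `M^{>t}`. -/
def truncGt {p q : ℕ} (M : Matrix (Fin p) (Fin q) ℝ) (t : ℝ) : Matrix (Fin p) (Fin q) ℝ :=
  Matrix.of fun i j => if t < |M i j| then M i j else 0

/-- `M^{<t} := M - M^{>t}`, i.e. the entries of absolute value `≤ t`. -/
def truncLe {p q : ℕ} (M : Matrix (Fin p) (Fin q) ℝ) (t : ℝ) : Matrix (Fin p) (Fin q) ℝ :=
  M - truncGt M t

/-- The spectral norm (largest singular value) of a rectangular real matrix, realized as the
operator norm of the induced map between Euclidean spaces. -/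
def specNorm {p q : ℕ} (M : Matrix (Fin p) (Fin q) ℝ) : ℝ :=
  ‖LinearMap.toContinuousLinearMap (Matrix.toEuclideanLin M)‖

/-- The event that the `(k,l)` block (of size `r × r`, `1`-based block indices) of the
matrix `(X̂_{ij}/b)` has max-norm `> ε`. -/
def blockExceed {Ω : Type*} (X : ℤ × ℤ → Ω → ℝ) (b : ℝ) (r k l : ℕ) (ε : ℝ) (ω : Ω) : Prop :=
  ∃ i ∈ Finset.Ioc ((k - 1) * r) (k * r), ∃ j ∈ Finset.Ioc ((l - 1) * r) (l * r),
    ε < |symX X (i : ℤ) (j : ℤ) ω / b|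

/-- `r_n = n^(1-η)` (as a natural number, via the floor). -/
def rseq (η : ℝ) (n : ℕ) : ℕ := ⌊(n : ℝ) ^ (1 - η)⌋₊

/-- `k_n = n^η` (as a natural number, via the floor). -/
def kseq (η : ℝ) (n : ℕ) : ℕ := ⌊(n : ℝ) ^ η⌋₊

/-- The set of `n` for which `n^(1-η)` and `n^η` are integers. -/
def goodSet (η : ℝ) : Set ℕ :=
  {n | ((rseq η n : ℝ) = (n : ℝ) ^ (1 - η)) ∧ ((kseq η n : ℝ) = (n : ℝ) ^ η)}

/-- `lam` is an eigenvalue of the real matrix `M`. -/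
def IsEigenvalue {n : Type*} [Fintype n] (M : Matrix n n ℝ) (lam : ℝ) : Prop :=
  ∃ v : n → ℝ, v ≠ 0 ∧ M.mulVec v = lam • v

/-- The multiset of singular values of a rectangular real matrix: the square roots of the
eigenvalues of `Mᵀ M` (`= Mᴴ M` over `ℝ`), with multiplicity. -/
def singularValues {p q : ℕ} (M : Matrix (Fin p) (Fin q) ℝ) : Multiset ℝ :=
  Finset.univ.val.map fun i =>
    Real.sqrt ((show (Mᵀ * M).IsHermitian by
      simpa using Matrix.isHermitian_conjTranspose_mul_self M).eigenvalues i)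

/-- The eigenvalues of a real symmetric matrix, sorted increasingly (as a list);
junk value for non-symmetric matrices. -/
def sortedEigs {N : ℕ} (M : Matrix (Fin N) (Fin N) ℝ) : List ℝ :=
  if h : M.IsHermitian then (Finset.univ.val.map h.eigenvalues).sort (· ≤ ·)
  else List.replicate N 0

/-- The index of row `i` of block-row `a` inside a `(k*r) × (k*r)` matrix partitioned
into `r × r` blocks. -/
def blkIdx {k r : ℕ} (a : Fin k) (i : Fin r) : Fin (k * r) :=
  ⟨a.1 * r + i.1, by
    have hi := i.2
    have ha := a.2
    have h1 : a.1 * r + i.1 < (a.1 + 1) * r := by nlinarith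
    have h2 : (a.1 + 1) * r ≤ k * r := by nlinarith
    exact lt_of_lt_of_le h1 h2⟩

/-- The `(a,b)` block (of size `r × r`) of a `(k*r) × (k*r)` matrix. -/
def blockOf {k r : ℕ} (H : Matrix (Fin (k * r)) (Fin (k * r)) ℝ) (a b : Fin k) :
    Matrix (Fin r) (Fin r) ℝ :=
  Matrix.of fun i j => H (blkIdx a i) (blkIdx b j)

/-- The `n × n` matrix with entries `X̂_{ij} 1{|X̂_{ij}| < t}` (not yet normalized). -/
def truncSymMat {Ω : Type*} (X : ℤ × ℤ → Ω → ℝ) (n : ℕ) (t : ℝ) (ω : Ω) :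
    Matrix (Fin n) (Fin n) ℝ :=
  Matrix.of fun i j =>
    if |symX X ((i : ℕ) + 1 : ℤ) ((j : ℕ) + 1 : ℤ) ω| < t
    then symX X ((i : ℕ) + 1 : ℤ) ((j : ℕ) + 1 : ℤ) ω else 0

/-!
A union bound over the entries of the blocks, with threshold `t_n = ε̃_n b_n = b_n^{(κ+1)/2}`
and `p_n = ℙ(|X₀₀| > t_n)`. Two exceedances in one block row whose sites in `ℤ²` are more than
`m` apart are independent, and there are at most `k_n r_n² n²` such pairs, contributing
`n^{4-η} p_n²`. If the sites are within distance `m`, then one of the entries lies either within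
distance `m` of a boundary between column blocks (`O(n k_n)` entries) or within distance `m` of
the diagonal block of its row (`O(k_n r_n²)` entries); these contribute `(n^{1+η} + n^{2-η}) p_n`.

Monotonicity and the doubling limit `ℙ(|X₀₀| > 2x) / ℙ(|X₀₀| > x) → 2^{-α}` give, by Cesàro
along `x = 2^k`, that `log ℙ(|X₀₀| > x) / log x → -α`. Together with `n² ℙ(|X₀₀| > b_n) → 1`
this yields `log p_n / log n → -(κ+1)`, and every term above tends to zero because
`κ > η > 2/3`.
-/

open Topology
open scoped ENNReal

theorem tendsto_div_natCast_of_tendsto_sub {v : ℕ → ℝ} {d : ℝ}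
    (h : Tendsto (fun k => v (k + 1) - v k) atTop (𝓝 d)) :
    Tendsto (fun k : ℕ => v k / k) atTop (𝓝 d) := by
  have hsum := (tendsto_const_div_atTop_nhds_zero_nat (v 0)).add h.cesaro
  rw [zero_add] at hsum
  refine hsum.congr fun k => ?_
  rw [Finset.sum_range_sub]
  ring

theorem tendsto_div_natCast_shifts {v : ℕ → ℝ} {d : ℝ}
    (h : Tendsto (fun k : ℕ => v k / k) atTop (𝓝 d)) :
    Tendsto (fun k : ℕ => v k / (k + 1)) atTop (𝓝 d) ∧
      Tendsto (fun k : ℕ => v (k + 1) / k) atTop (𝓝 d) := by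
  constructor
  · have := h.mul (tendsto_natCast_div_add_atTop (1 : ℝ))
    rw [mul_one] at this
    refine this.congr' ?_
    filter_upwards [eventually_gt_atTop 0] with k hk
    field_simp
  · have := (h.comp (tendsto_add_atTop_nat 1)).mul
      ((tendsto_const_nhds (x := (1 : ℝ))).add tendsto_one_div_atTop_nhds_zero_nat)
    rw [add_zero, mul_one] at this
    refine this.congr' ?_
    filter_upwards [eventually_gt_atTop 0] with k hk
    simp only [Function.comp_apply, Nat.cast_add, Nat.cast_one]
    field_simp

theorem Antitone.tendsto_div_logb_two {g : ℝ → ℝ} (hg : Antitone g) {d : ℝ} (hd : d < 0)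
    (h : Tendsto (fun k : ℕ => g (2 ^ k) / k) atTop (𝓝 d)) :
    Tendsto (fun x => g x / Real.logb 2 x) atTop (𝓝 d) := by
  have hneg : ∀ᶠ k : ℕ in atTop, g (2 ^ k) < 0 := by
    filter_upwards [h.eventually_lt_const hd, eventually_gt_atTop 0] with k hk hk0
    have : (0 : ℝ) < k := by exact_mod_cast hk0
    exact ((div_neg_iff.1 hk).resolve_left fun h => by linarith [h.2]).1
  have div_le_div_of_neg {a b c : ℝ} (ha : a < 0) (hb : 0 < b) (hbc : b ≤ c) : a / b ≤ a / c := by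
    rw [div_le_div_iff₀ hb (hb.trans_le hbc)]
    nlinarith
  obtain ⟨hupper, hlower⟩ := tendsto_div_natCast_shifts h
  -- sandwich `log₂ x` between `K x = ⌊log₂ x⌋` and `K x + 1`
  set K : ℝ → ℕ := fun x => ⌊Real.logb 2 x⌋₊
  have hK : Tendsto K atTop atTop :=
    tendsto_nat_floor_atTop.comp (Real.tendsto_logb_atTop one_lt_two)
  refine tendsto_of_tendsto_of_tendsto_of_le_of_le' (hlower.comp hK) (hupper.comp hK) ?_ ?_
  all_goals
    filter_upwards [hK.eventually hneg, hK.eventually ((tendsto_add_atTop_nat 1).eventually hneg),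
      hK.eventually_gt_atTop 0, eventually_ge_atTop 1] with x hk hk1 hk0 hx
    have hKle : (K x : ℝ) ≤ Real.logb 2 x := Nat.floor_le (Real.logb_nonneg one_lt_two hx)
    have hKlt : Real.logb 2 x < K x + 1 := Nat.lt_floor_add_one _
    have hK0 : (0 : ℝ) < K x := by exact_mod_cast hk0
    simp only [Function.comp_apply] at hk hk1 ⊢
  · have hgx : g (2 ^ (K x + 1)) ≤ g x := hg <| by
      rw [← Real.rpow_natCast, ← Real.logb_le_iff_le_rpow one_lt_two (by linarith)]
      push_cast; exact hKlt.le
    calc g (2 ^ (K x + 1)) / K x ≤ g (2 ^ (K x + 1)) / Real.logb 2 x :=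
          div_le_div_of_neg hk1 hK0 hKle
      _ ≤ g x / Real.logb 2 x := div_le_div_of_nonneg_right hgx (hK0.le.trans hKle)
  · have hgx : g x ≤ g (2 ^ K x) := hg <| by
      rw [← Real.rpow_natCast]
      exact (Real.le_logb_iff_rpow_le one_lt_two (by linarith)).1 hKle
    calc g x / Real.logb 2 x ≤ g (2 ^ K x) / Real.logb 2 x :=
          div_le_div_of_nonneg_right hgx (hK0.le.trans hKle)
      _ ≤ g (2 ^ K x) / (K x + 1) := div_le_div_of_neg hk (hK0.trans_le hKle) hKlt.le

theorem Antitone.tendsto_div_log {g : ℝ → ℝ} (hg : Antitone g) {d : ℝ} (hd : d < 0)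
    (h : Tendsto (fun x => g (2 * x) - g x) atTop (𝓝 d)) :
    Tendsto (fun x => g x / Real.log x) atTop (𝓝 (d / Real.log 2)) := by
  have hpow : Tendsto (fun k : ℕ => g (2 ^ k) / k) atTop (𝓝 d) := by
    refine tendsto_div_natCast_of_tendsto_sub ?_
    simpa [pow_succ', Function.comp_def] using
      h.comp (tendsto_pow_atTop_atTop_of_one_lt one_lt_two)
  refine ((hg.tendsto_div_logb_two hd hpow).div_const (Real.log 2)).congr' ?_
  filter_upwards [eventually_gt_atTop 1] with x hx
  have := Real.log_pos hx
  have := Real.log_pos one_lt_two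
  rw [Real.logb]
  field_simp

theorem tendsto_rpow_mul_pow_of_log_div_log {u : ℕ → ℝ} (hu : ∀ n, 0 ≤ u n) {c : ℝ} (hc : c ≠ 0)
    (hlim : Tendsto (fun n : ℕ => Real.log (u n) / Real.log n) atTop (𝓝 (-c))) {e : ℝ} {j : ℕ}
    (h : e < j * c) : Tendsto (fun n : ℕ => (n : ℝ) ^ e * u n ^ j) atTop (𝓝 0) := by
  have hexp := (Real.tendsto_log_atTop.comp tendsto_natCast_atTop_atTop).atTop_mul_neg
    (by linarith : e + j * -c < 0) (tendsto_const_nhds.add (hlim.const_mul (j : ℝ)))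
  refine (Real.tendsto_exp_atBot.comp hexp).congr' ?_
  filter_upwards [eventually_gt_atTop 1, hlim.eventually_ne (neg_ne_zero.2 hc)] with n hn hun
  have hn0 : (0 : ℝ) < n := by exact_mod_cast (zero_lt_one.trans hn)
  have hlogn : Real.log n ≠ 0 := (Real.log_pos (by exact_mod_cast hn)).ne'
  have hu0 : 0 < u n := (hu n).lt_of_ne fun h0 => hun (by rw [← h0, Real.log_zero, zero_div])
  simp only [Function.comp_apply]
  rw [Real.rpow_def_of_pos hn0, ← Real.exp_log (pow_pos hu0 j), ← Real.exp_add, Real.log_pow]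
  congr 1
  field_simp

theorem tendsto_log_div_log_of_tendsto_pow_mul {u : ℕ → ℝ} (hu : ∀ n, 0 < u n) (d : ℕ)
    (h : Tendsto (fun n : ℕ => (n : ℝ) ^ d * u n) atTop (𝓝 1)) :
    Tendsto (fun n : ℕ => Real.log (u n) / Real.log n) atTop (𝓝 (-d)) := by
  have hlog := (h.log one_ne_zero).div_atTop
    (Real.tendsto_log_atTop.comp tendsto_natCast_atTop_atTop)
  have := hlog.sub_const d
  rw [zero_sub] at this
  refine this.congr' ?_
  filter_upwards [eventually_gt_atTop 1] with n hn
  have hlogn : 0 < Real.log n := Real.log_pos (by exact_mod_cast hn)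
  have hn0 : (n : ℝ) ≠ 0 := by positivity
  simp only [Function.comp_apply]
  rw [Real.log_mul (pow_ne_zero _ hn0) (hu n).ne', Real.log_pow]
  field_simp
  ring

theorem tendsto_log_comp_rpow_div_log {g : ℝ → ℝ} {α : ℝ} (hα : α ≠ 0)
    (hg : Tendsto (fun x => g x / Real.log x) atTop (𝓝 (-α)))
    {b : ℕ → ℝ} (hb : Tendsto b atTop atTop) {c : ℝ}
    (hgb : Tendsto (fun n : ℕ => g (b n) / Real.log n) atTop (𝓝 (-c))) {s : ℝ} (hs : 0 < s) :
    Tendsto (fun n : ℕ => g (b n ^ s) / Real.log n) atTop (𝓝 (-(c * s))) := by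
  have hbs := (hg.comp ((tendsto_rpow_atTop hs).comp hb)).mul_const s
  have := (hbs.mul hgb).div (hg.comp hb) (neg_ne_zero.2 hα)
  convert this.congr' ?_ using 2
  · field_simp
  filter_upwards [hb.eventually_gt_atTop 1, (hg.comp hb).eventually_ne (neg_ne_zero.2 hα)]
    with n hbn hgn
  have hlogb := Real.log_pos hbn
  simp only [Pi.div_apply, Function.comp_apply] at hgn ⊢
  have hgb0 : g (b n) ≠ 0 := fun h0 => hgn (by rw [h0, zero_div])
  rw [Real.log_rpow (by linarith)]
  field_simp

def tailProb {Ω : Type*} [MeasurableSpace Ω] (μ : Measure Ω) (X : ℤ × ℤ → Ω → ℝ) (x : ℝ) : ℝ :=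
  μ.real {ω | x < |X (0, 0) ω|}

section Tail

variable {Ω : Type*} [MeasurableSpace Ω] {μ : Measure Ω} {X : ℤ × ℤ → Ω → ℝ} {α : ℝ}

theorem tailProb_antitone [IsFiniteMeasure μ] : Antitone (tailProb μ X) :=
  fun _ _ hxy => measureReal_mono fun _ (h : _ < _) => hxy.trans_lt h

theorem IsRegVarying.tailProb_pos [IsFiniteMeasure μ] (h : IsRegVarying μ X α) (x : ℝ) :
    0 < tailProb μ X x := by
  obtain ⟨L, hL, hT⟩ := h
  have hx : 0 < max x 1 := lt_max_of_lt_right one_pos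
  have : 0 < tailProb μ X (max x 1) := by
    rw [tailProb, measureReal_def, hT _ hx]
    exact mul_pos (Real.rpow_pos_of_pos hx _) (hL.1 _ hx)
  exact this.trans_le (tailProb_antitone (le_max_left x 1))

theorem IsRegVarying.tendsto_tailProb_two_mul_div (h : IsRegVarying μ X α) :
    Tendsto (fun x => tailProb μ X (2 * x) / tailProb μ X x) atTop (𝓝 (2 ^ (-α))) := by
  obtain ⟨L, hL, hT⟩ := h
  have := (hL.2 2 two_pos).const_mul ((2 : ℝ) ^ (-α))
  rw [mul_one] at this
  refine this.congr' ?_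
  filter_upwards [eventually_gt_atTop 0] with x hx
  have := hL.1 x hx
  have := Real.rpow_pos_of_pos hx (-α)
  rw [tailProb, tailProb, measureReal_def, measureReal_def, hT x hx, hT (2 * x) (by positivity),
    Real.mul_rpow zero_le_two hx.le]
  field_simp

theorem IsRegVarying.tendsto_log_tailProb_div_log [IsFiniteMeasure μ] (h : IsRegVarying μ X α)
    (hα : 0 < α) :
    Tendsto (fun x => Real.log (tailProb μ X x) / Real.log x) atTop (𝓝 (-α)) := by
  have hlog2 := Real.log_pos one_lt_two
  have hanti : Antitone fun x => Real.log (tailProb μ X x) := fun x y hxy =>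
    Real.log_le_log (h.tailProb_pos y) (tailProb_antitone hxy)
  have hdiff : Tendsto (fun x => Real.log (tailProb μ X (2 * x)) - Real.log (tailProb μ X x))
      atTop (𝓝 (-α * Real.log 2)) := by
    have := h.tendsto_tailProb_two_mul_div.log (by positivity)
    rw [Real.log_rpow two_pos] at this
    refine this.congr fun x => ?_
    rw [Real.log_div (h.tailProb_pos _).ne' (h.tailProb_pos _).ne']
  have := Antitone.tendsto_div_log hanti (by nlinarith : -α * Real.log 2 < 0) hdiff
  rwa [mul_div_cancel_right₀ _ hlog2.ne'] at this

end Tail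

section Field

variable {Ω : Type*} [MeasurableSpace Ω] {μ : Measure Ω} {X : ℤ × ℤ → Ω → ℝ}

theorem IsStationaryField.identDistrib (hstat : IsStationaryField μ X)
    (hmeas : ∀ p, Measurable (X p)) (s : ℤ × ℤ) : IdentDistrib (X s) (X (0, 0)) μ μ where
  aemeasurable_fst := (hmeas s).aemeasurable
  aemeasurable_snd := (hmeas _).aemeasurable
  map_eq := by
    have h := congrArg (Measure.map fun f : ℤ × ℤ → ℝ => f (0, 0)) (hstat s.1 s.2)
    rw [Measure.map_map (measurable_pi_apply _) (measurable_pi_lambda _ fun _ => hmeas _),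
      Measure.map_map (measurable_pi_apply _) (measurable_pi_lambda _ fun _ => hmeas _)] at h
    simpa [Function.comp_def] using h

theorem IsMDependent.indepFun {m : ℕ} (hdep : IsMDependent μ X m) {s s' : ℤ × ℤ}
    (h : (m : ℤ) < max |s.1 - s'.1| |s.2 - s'.2|) : IndepFun (X s) (X s') μ :=
  (hdep {s} {s'} (by rintro p rfl q rfl; exact h)).comp
    (measurable_pi_apply (⟨s, rfl⟩ : ({s} : Set (ℤ × ℤ))))
    (measurable_pi_apply (⟨s', rfl⟩ : ({s'} : Set (ℤ × ℤ))))

end Field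

theorem symX_eq {Ω : Type*} (X : ℤ × ℤ → Ω → ℝ) (i j : ℤ) (ω : Ω) :
    symX X i j ω = X (min i j, max i j) ω := by
  unfold symX
  split_ifs with h
  · rw [min_eq_left h, max_eq_right h]
  · rw [min_eq_right (le_of_not_ge h), max_eq_left (le_of_not_ge h)]

/-- The site of `ℤ²` that carries the entry `X̂_{pq}`. -/
def symIdx (e : ℕ × ℕ) : ℤ × ℤ := (min (e.1 : ℤ) e.2, max (e.1 : ℤ) e.2)

def SymSeparated (m : ℕ) (e e' : ℕ × ℕ) : Prop :=
  (m : ℤ) < max |(symIdx e).1 - (symIdx e').1| |(symIdx e).2 - (symIdx e').2|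

instance (m : ℕ) : DecidableRel (SymSeparated m) := fun _ _ => by
  unfold SymSeparated; infer_instance

theorem close_of_not_symSeparated {m : ℕ} {e e' : ℕ × ℕ} (h : ¬ SymSeparated m e e') :
    (e.1 ≤ e'.1 + m ∧ e'.1 ≤ e.1 + m ∧ e.2 ≤ e'.2 + m ∧ e'.2 ≤ e.2 + m) ∨
      (e.1 ≤ e'.2 + m ∧ e'.2 ≤ e.1 + m ∧ e.2 ≤ e'.1 + m ∧ e'.1 ≤ e.2 + m) := by
  simp only [SymSeparated, symIdx, lt_max_iff, not_or, not_lt, abs_le] at h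
  omega

def exceedSet {Ω : Type*} (X : ℤ × ℤ → Ω → ℝ) (t : ℝ) (e : ℕ × ℕ) : Set Ω :=
  {ω | t < |symX X e.1 e.2 ω|}

theorem exceedSet_eq_preimage {Ω : Type*} (X : ℤ × ℤ → Ω → ℝ) (t : ℝ) (e : ℕ × ℕ) :
    exceedSet X t e = X (symIdx e) ⁻¹' {y | t < |y|} := by
  ext ω
  simp [exceedSet, symIdx, symX_eq]

theorem measurableSet_abs_gt (t : ℝ) : MeasurableSet {y : ℝ | t < |y|} :=
  measurableSet_lt measurable_const continuous_abs.measurable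

section Exceedances

variable {Ω : Type*} [MeasurableSpace Ω] {μ : Measure Ω} {X : ℤ × ℤ → Ω → ℝ}

theorem measure_exceedSet (hstat : IsStationaryField μ X) (hmeas : ∀ p, Measurable (X p))
    (t : ℝ) (e : ℕ × ℕ) : μ (exceedSet X t e) = μ {ω | t < |X (0, 0) ω|} := by
  rw [exceedSet_eq_preimage]
  exact (hstat.identDistrib hmeas _).measure_mem_eq (measurableSet_abs_gt t)

theorem measure_exceedSet_inter (hstat : IsStationaryField μ X) (hmeas : ∀ p, Measurable (X p))
    {m : ℕ} (hdep : IsMDependent μ X m) {e e' : ℕ × ℕ} (h : SymSeparated m e e') (t : ℝ) :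
    μ (exceedSet X t e ∩ exceedSet X t e') = μ {ω | t < |X (0, 0) ω|} ^ 2 := by
  rw [exceedSet_eq_preimage, exceedSet_eq_preimage,
    (hdep.indepFun h).measure_inter_preimage_eq_mul _ _ (measurableSet_abs_gt t)
      (measurableSet_abs_gt t),
    ← exceedSet_eq_preimage, ← exceedSet_eq_preimage, measure_exceedSet hstat hmeas,
    measure_exceedSet hstat hmeas, sq]

theorem measure_biUnion_exceedSet_le (hstat : IsStationaryField μ X)
    (hmeas : ∀ p, Measurable (X p)) (S : Finset (ℕ × ℕ)) (t : ℝ) :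
    μ (⋃ e ∈ S, exceedSet X t e) ≤ S.card * μ {ω | t < |X (0, 0) ω|} := by
  refine (measure_biUnion_finset_le S _).trans_eq ?_
  rw [Finset.sum_congr rfl fun e _ => measure_exceedSet hstat hmeas t e, Finset.sum_const,
    nsmul_eq_mul]

theorem measure_biUnion_exceedSet_inter_le (hstat : IsStationaryField μ X)
    (hmeas : ∀ p, Measurable (X p)) {m : ℕ} (hdep : IsMDependent μ X m)
    (S : Finset ((ℕ × ℕ) × (ℕ × ℕ))) (hS : ∀ e ∈ S, SymSeparated m e.1 e.2) (t : ℝ) :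
    μ (⋃ e ∈ S, exceedSet X t e.1 ∩ exceedSet X t e.2) ≤
      S.card * μ {ω | t < |X (0, 0) ω|} ^ 2 := by
  refine (measure_biUnion_finset_le S _).trans_eq ?_
  rw [Finset.sum_congr rfl fun e he => measure_exceedSet_inter hstat hmeas hdep (hS e he) t,
    Finset.sum_const, nsmul_eq_mul]

end Exceedances

section Blocks

def blk (r i : ℕ) : Finset ℕ := Finset.Ioc ((i - 1) * r) (i * r)

def blkBoundary (r m i : ℕ) : Finset ℕ :=
  Finset.Ioc ((i - 1) * r) ((i - 1) * r + m) ∪ Finset.Ioc (i * r - m) (i * r)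

def blkNbhd (r m i : ℕ) : Finset ℕ := Finset.Ioc ((i - 1) * r - m) (i * r + m)

theorem mem_blk {r i p : ℕ} : p ∈ blk r i ↔ i * r - r < p ∧ p ≤ i * r := by
  rw [blk, Finset.mem_Ioc, Nat.sub_mul, one_mul]

theorem card_blk_le (r i : ℕ) : (blk r i).card ≤ r := by
  rw [blk, Nat.card_Ioc, Nat.sub_mul, one_mul]
  omega

theorem card_blkBoundary_le (r m i : ℕ) : (blkBoundary r m i).card ≤ 2 * m := by
  refine (Finset.card_union_le _ _).trans ?_
  rw [Nat.card_Ioc, Nat.card_Ioc]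
  omega

theorem card_blkNbhd_le (r m i : ℕ) : (blkNbhd r m i).card ≤ r + 2 * m := by
  rw [blkNbhd, Nat.card_Ioc, Nat.sub_mul, one_mul]
  omega

theorem mem_blkBoundary_of_close {r m j l q q' : ℕ} (hq : q ∈ blk r j) (hq' : q' ∈ blk r l)
    (hjl : j ≠ l) (h₁ : q ≤ q' + m) (h₂ : q' ≤ q + m) : q ∈ blkBoundary r m j := by
  rw [mem_blk] at hq hq'
  simp only [blkBoundary, Finset.mem_union, Finset.mem_Ioc, Nat.sub_mul, one_mul]
  rcases Nat.lt_or_gt_of_ne hjl with h | h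
  · have := Nat.mul_le_mul_right r h
    rw [Nat.succ_mul] at this
    omega
  · have := Nat.mul_le_mul_right r h
    rw [Nat.succ_mul] at this
    omega

theorem mem_blkNbhd_of_close {r m i p q : ℕ} (hp : p ∈ blk r i) (hq : 0 < q) (h₁ : q ≤ p + m)
    (h₂ : p ≤ q + m) : q ∈ blkNbhd r m i := by
  rw [mem_blk] at hp
  rw [blkNbhd, Finset.mem_Ioc, Nat.sub_mul, one_mul]
  omega

def blkIndices (k r : ℕ) : Finset ℕ := (Finset.Icc 1 k).biUnion (blk r)

theorem card_blkIndices_le (k r : ℕ) : (blkIndices k r).card ≤ k * r := by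
  simpa [blkIndices] using
    Finset.card_biUnion_le_card_mul (Finset.Icc 1 k) _ _ fun i _ => card_blk_le r i

def farPairs (k r m : ℕ) : Finset ((ℕ × ℕ) × (ℕ × ℕ)) :=
  ((Finset.Icc 1 k).biUnion fun i =>
    (blk r i ×ˢ blkIndices k r) ×ˢ (blk r i ×ˢ blkIndices k r)).filter
      fun e => SymSeparated m e.1 e.2

def boundaryEntries (k r m : ℕ) : Finset (ℕ × ℕ) :=
  blkIndices k r ×ˢ (Finset.Icc 1 k).biUnion (blkBoundary r m)

def nearDiagEntries (k r m : ℕ) : Finset (ℕ × ℕ) :=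
  (Finset.Icc 1 k).biUnion fun i => blk r i ×ˢ blkNbhd r m i

theorem card_farPairs_le (k r m : ℕ) : (farPairs k r m).card ≤ k ^ 3 * r ^ 4 := by
  refine (Finset.card_filter_le _ _).trans ?_
  refine (Finset.card_biUnion_le_card_mul _ _ ((r * (k * r)) * (r * (k * r))) fun i _ => ?_).trans
    (le_of_eq (by rw [Nat.card_Icc, Nat.add_sub_cancel]; ring))
  simp only [Finset.card_product]
  have := card_blk_le r i
  have := card_blkIndices_le k r
  gcongr

theorem card_boundaryEntries_le (k r m : ℕ) :
    (boundaryEntries k r m).card ≤ 2 * m * (k ^ 2 * r) := by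
  rw [boundaryEntries, Finset.card_product]
  have := Finset.card_biUnion_le_card_mul _ _ _ fun i (_ : i ∈ Finset.Icc 1 k) =>
    card_blkBoundary_le r m i
  rw [Nat.card_Icc, Nat.add_sub_cancel] at this
  calc _ ≤ k * r * (k * (2 * m)) := Nat.mul_le_mul (card_blkIndices_le k r) this
    _ = _ := by ring

theorem card_nearDiagEntries_le (k r m : ℕ) :
    (nearDiagEntries k r m).card ≤ k * r ^ 2 + 2 * m * (k * r) := by
  refine (Finset.card_biUnion_le_card_mul _ _ (r * (r + 2 * m)) fun i _ => ?_).trans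
    (le_of_eq (by rw [Nat.card_Icc, Nat.add_sub_cancel]; ring))
  rw [Finset.card_product]
  exact Nat.mul_le_mul (card_blk_le r i) (card_blkNbhd_le r m i)

end Blocks

section BlockEvents

variable {Ω : Type*} {X : ℤ × ℤ → Ω → ℝ}

theorem blockExceed_iff {b : ℝ} (hb : 0 < b) (r i j : ℕ) (ε : ℝ) (ω : Ω) :
    blockExceed X b r i j ε ω ↔ ∃ p ∈ blk r i, ∃ q ∈ blk r j, ω ∈ exceedSet X (ε * b) (p, q) := by
  simp only [blockExceed, blk, exceedSet, Set.mem_ofPred_eq, abs_div, abs_of_pos hb,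
    lt_div_iff₀ hb]

theorem setOf_twoExceedingBlocks_subset (k r m : ℕ) {b : ℝ} (hb : 0 < b) (ε : ℝ) :
    {ω | ∃ i ∈ Finset.Icc 1 k, ∃ j ∈ Finset.Icc 1 k, ∃ l ∈ Finset.Icc 1 k, j ≠ l ∧
        blockExceed X b r i j ε ω ∧ blockExceed X b r i l ε ω} ⊆
      ((⋃ e ∈ farPairs k r m, exceedSet X (ε * b) e.1 ∩ exceedSet X (ε * b) e.2) ∪
        ⋃ e ∈ boundaryEntries k r m, exceedSet X (ε * b) e) ∪
        ⋃ e ∈ nearDiagEntries k r m, exceedSet X (ε * b) e := by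
  rintro ω ⟨i, hi, j, hj, l, hl, hjl, h, h'⟩
  obtain ⟨p, hp, q, hq, hpq⟩ := (blockExceed_iff hb r i j ε ω).1 h
  obtain ⟨p', hp', q', hq', hpq'⟩ := (blockExceed_iff hb r i l ε ω).1 h'
  have hcol {q j : ℕ} (hj : j ∈ Finset.Icc 1 k) (hq : q ∈ blk r j) : q ∈ blkIndices k r :=
    Finset.mem_biUnion.2 ⟨j, hj, hq⟩
  by_cases hsep : SymSeparated m (p, q) (p', q')
  · refine Or.inl (Or.inl (Set.mem_iUnion₂.2 ⟨((p, q), (p', q')), ?_, hpq, hpq'⟩))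
    refine Finset.mem_filter.2 ⟨Finset.mem_biUnion.2 ⟨i, hi, ?_⟩, hsep⟩
    simp only [Finset.mem_product]
    exact ⟨⟨hp, hcol hj hq⟩, hp', hcol hl hq'⟩
  -- by the symmetrization, two nearby entries are close either entrywise, which forces a
  -- block boundary between their columns, or after transposing one of them
  rcases close_of_not_symSeparated hsep with ⟨-, -, hqq₁, hqq₂⟩ | ⟨-, -, hqp₁, hqp₂⟩
  · refine Or.inl (Or.inr (Set.mem_iUnion₂.2 ⟨(p, q), ?_, hpq⟩))
    exact Finset.mem_product.2 ⟨hcol hi hp,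
      Finset.mem_biUnion.2 ⟨j, hj, mem_blkBoundary_of_close hq hq' hjl hqq₁ hqq₂⟩⟩
  · refine Or.inr (Set.mem_iUnion₂.2 ⟨(p, q), ?_, hpq⟩)
    exact Finset.mem_biUnion.2 ⟨i, hi, Finset.mem_product.2 ⟨hp,
      mem_blkNbhd_of_close hp' (Nat.zero_lt_of_lt (mem_blk.1 hq).1) hqp₁ hqp₂⟩⟩

theorem setOf_diagExceedingBlock_subset (k r : ℕ) {b : ℝ} (hb : 0 < b) (ε : ℝ) :
    {ω | ∃ i ∈ Finset.Icc 1 k, blockExceed X b r i i ε ω} ⊆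
      ⋃ e ∈ nearDiagEntries k r 0, exceedSet X (ε * b) e := by
  rintro ω ⟨i, hi, h⟩
  obtain ⟨p, hp, q, hq, hpq⟩ := (blockExceed_iff hb r i i ε ω).1 h
  refine Set.mem_iUnion₂.2
    ⟨(p, q), Finset.mem_biUnion.2 ⟨i, hi, Finset.mem_product.2 ⟨hp, ?_⟩⟩, hpq⟩
  exact mem_blkNbhd_of_close hq (Nat.zero_lt_of_lt (mem_blk.1 hq).1) le_rfl le_rfl

variable [MeasurableSpace Ω] {μ : Measure Ω}

theorem measure_twoExceedingBlocks_le (hstat : IsStationaryField μ X)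
    (hmeas : ∀ p, Measurable (X p)) {m : ℕ} (hdep : IsMDependent μ X m) (k r : ℕ) {b : ℝ}
    (hb : 0 < b) (ε : ℝ) :
    μ {ω | ∃ i ∈ Finset.Icc 1 k, ∃ j ∈ Finset.Icc 1 k, ∃ l ∈ Finset.Icc 1 k, j ≠ l ∧
        blockExceed X b r i j ε ω ∧ blockExceed X b r i l ε ω} ≤
      ((k ^ 3 * r ^ 4 : ℕ) : ℝ≥0∞) * μ {ω | ε * b < |X (0, 0) ω|} ^ 2 +
        ((2 * m * (k ^ 2 * r) + (k * r ^ 2 + 2 * m * (k * r)) : ℕ) : ℝ≥0∞) *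
          μ {ω | ε * b < |X (0, 0) ω|} := by
  refine (measure_mono (setOf_twoExceedingBlocks_subset k r m hb ε)).trans
    ((measure_union_le _ _).trans ((add_le_add (measure_union_le _ _) le_rfl).trans ?_))
  rw [Nat.cast_add, add_mul, ← add_assoc]
  gcongr
  · refine (measure_biUnion_exceedSet_inter_le hstat hmeas hdep _
      (fun e he => (Finset.mem_filter.1 he).2) _).trans ?_
    gcongr
    exact card_farPairs_le k r m
  · refine (measure_biUnion_exceedSet_le hstat hmeas _ _).trans ?_
    gcongr
    exact card_boundaryEntries_le k r m
  · refine (measure_biUnion_exceedSet_le hstat hmeas _ _).trans ?_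
    gcongr
    exact card_nearDiagEntries_le k r m

theorem measure_diagExceedingBlock_le (hstat : IsStationaryField μ X)
    (hmeas : ∀ p, Measurable (X p)) (k r : ℕ) {b : ℝ} (hb : 0 < b) (ε : ℝ) :
    μ {ω | ∃ i ∈ Finset.Icc 1 k, blockExceed X b r i i ε ω} ≤
      ((k * r ^ 2 : ℕ) : ℝ≥0∞) * μ {ω | ε * b < |X (0, 0) ω|} := by
  refine (measure_mono (setOf_diagExceedingBlock_subset k r hb ε)).trans
    ((measure_biUnion_exceedSet_le hstat hmeas _ _).trans ?_)
  gcongr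
  simpa using card_nearDiagEntries_le k r 0

end BlockEvents

theorem kseq_pow_mul_rseq_pow {η : ℝ} {n : ℕ} (hn : n ∈ goodSet η) (hn0 : 0 < n) (a b : ℕ) :
    (kseq η n : ℝ) ^ a * (rseq η n : ℝ) ^ b = (n : ℝ) ^ (a * η + b * (1 - η)) := by
  rw [hn.2, hn.1, ← Real.rpow_mul_natCast n.cast_nonneg, ← Real.rpow_mul_natCast n.cast_nonneg,
    ← Real.rpow_add (by positivity)]
  ring_nf

theorem tendsto_kseq_pow_mul_rseq_pow_mul_pow {η c : ℝ} {u : ℕ → ℝ} (hu : ∀ n, 0 ≤ u n)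
    (hc : c ≠ 0) (hlim : Tendsto (fun n : ℕ => Real.log (u n) / Real.log n) atTop (𝓝 (-c)))
    {a b j : ℕ} (h : a * η + b * (1 - η) < j * c) :
    Tendsto (fun n => (kseq η n : ℝ≥0∞) ^ a * (rseq η n : ℝ≥0∞) ^ b * ENNReal.ofReal (u n) ^ j)
      (atTop ⊓ 𝓟 (goodSet η)) (𝓝 0) := by
  have := ENNReal.tendsto_ofReal (tendsto_rpow_mul_pow_of_log_div_log hu hc hlim h)
  rw [ENNReal.ofReal_zero] at this
  refine (this.mono_left inf_le_left).congr' ?_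
  rw [EventuallyEq, eventually_inf_principal]
  filter_upwards [eventually_gt_atTop 0] with n hn0 hn
  rw [← kseq_pow_mul_rseq_pow hn hn0, ENNReal.ofReal_mul (by positivity),
    ENNReal.ofReal_mul (by positivity), ENNReal.ofReal_pow (by positivity),
    ENNReal.ofReal_pow (by positivity), ENNReal.ofReal_pow (hu n), ENNReal.ofReal_natCast,
    ENNReal.ofReal_natCast]

section Asymptotics

variable {Ω : Type*} [MeasurableSpace Ω] {μ : Measure Ω} [IsFiniteMeasure μ] {X : ℤ × ℤ → Ω → ℝ}

theorem ofReal_tailProb (x : ℝ) :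
    ENNReal.ofReal (tailProb μ X x) = μ {ω | x < |X (0, 0) ω|} :=
  ofReal_measureReal

theorem IsRegVarying.tendsto_log_tailProb_rpow_div_log {α : ℝ}
    (hreg : IsRegVarying μ X α) (hα : 0 < α) {a : ℕ → ℝ} (ha : IsNormSeq μ X a) {s : ℝ}
    (hs : 0 < s) :
    Tendsto (fun n : ℕ => Real.log (tailProb μ X (a (n ^ 2) ^ s)) / Real.log n) atTop
      (𝓝 (-(2 * s))) := by
  have hsq := ha.2.comp (tendsto_pow_atTop (two_ne_zero : 2 ≠ 0))
  have hb := tendsto_log_div_log_of_tendsto_pow_mul (fun n => hreg.tailProb_pos (a (n ^ 2))) 2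
    (by simpa [Function.comp_def, tailProb, measureReal_def] using hsq)
  exact tendsto_log_comp_rpow_div_log hα.ne' (hreg.tendsto_log_tailProb_div_log hα)
    (ha.1.comp (tendsto_pow_atTop two_ne_zero)) (by simpa using hb) hs

theorem tendsto_measure_twoExceedingBlocks (hstat : IsStationaryField μ X)
    (hmeas : ∀ p, Measurable (X p)) {m : ℕ} (hdep : IsMDependent μ X m) {η c : ℝ} {b ε : ℕ → ℝ}
    (hb : ∀ᶠ n in atTop, 0 < b n)
    (hc : Tendsto (fun n : ℕ => Real.log (tailProb μ X (ε n * b n)) / Real.log n) atTop (𝓝 (-c)))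
    (hη : 0 ≤ η) (hc₁ : 4 - η < 2 * c) (hc₂ : 1 + η < c) :
    Tendsto (fun n : ℕ => μ {ω | ∃ i ∈ Finset.Icc 1 (kseq η n), ∃ j ∈ Finset.Icc 1 (kseq η n),
        ∃ l ∈ Finset.Icc 1 (kseq η n), j ≠ l ∧
        blockExceed X (b n) (rseq η n) i j (ε n) ω ∧ blockExceed X (b n) (rseq η n) i l (ε n) ω})
      (atTop ⊓ 𝓟 (goodSet η)) (𝓝 0) := by
  have hT {p q j : ℕ} (h : p * η + q * (1 - η) < j * c) :=
    tendsto_kseq_pow_mul_rseq_pow_mul_pow (u := fun n => tailProb μ X (ε n * b n))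
      (fun _ => measureReal_nonneg) (by linarith) hc h
  have hlim := (hT (p := 3) (q := 4) (j := 2) (by push_cast; linarith)).add
    ((ENNReal.Tendsto.const_mul (hT (p := 2) (q := 1) (j := 1) (by push_cast; linarith))
      (Or.inr (ENNReal.natCast_ne_top (2 * m)))).add
    ((hT (p := 1) (q := 2) (j := 1) (by push_cast; linarith)).add
      (ENNReal.Tendsto.const_mul (hT (p := 1) (q := 1) (j := 1) (by push_cast; linarith))
        (Or.inr (ENNReal.natCast_ne_top (2 * m))))))
  simp only [mul_zero, add_zero] at hlim
  refine tendsto_of_tendsto_of_tendsto_of_le_of_le' tendsto_const_nhds hlim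
    (.of_forall fun _ => zero_le) ?_
  filter_upwards [hb.filter_mono inf_le_left] with n hbn
  refine (measure_twoExceedingBlocks_le hstat hmeas hdep _ _ hbn _).trans_eq ?_
  rw [← ofReal_tailProb]
  push_cast
  ring

theorem tendsto_measure_diagExceedingBlock (hstat : IsStationaryField μ X)
    (hmeas : ∀ p, Measurable (X p)) {η c : ℝ} {b ε : ℕ → ℝ} (hb : ∀ᶠ n in atTop, 0 < b n)
    (hc : Tendsto (fun n : ℕ => Real.log (tailProb μ X (ε n * b n)) / Real.log n) atTop (𝓝 (-c)))
    (hc₁ : 2 - η < c) (hc₂ : 0 < c) :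
    Tendsto (fun n : ℕ => μ {ω | ∃ i ∈ Finset.Icc 1 (kseq η n),
        blockExceed X (b n) (rseq η n) i i (ε n) ω}) (atTop ⊓ 𝓟 (goodSet η)) (𝓝 0) := by
  have hlim := tendsto_kseq_pow_mul_rseq_pow_mul_pow (η := η) (a := 1) (b := 2) (j := 1)
    (u := fun n => tailProb μ X (ε n * b n)) (fun _ => measureReal_nonneg) hc₂.ne' hc
    (by push_cast; linarith)
  refine tendsto_of_tendsto_of_tendsto_of_le_of_le' tendsto_const_nhds hlim
    (.of_forall fun _ => zero_le) ?_
  filter_upwards [hb.filter_mono inf_le_left] with n hbn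
  refine (measure_diagExceedingBlock_le hstat hmeas _ _ hbn _).trans_eq ?_
  rw [← ofReal_tailProb]
  push_cast
  ring

end Asymptotics

theorem stmt7_general {Ω : Type*} [MeasurableSpace Ω] (μ : Measure Ω) [IsProbabilityMeasure μ]
    (X : ℤ × ℤ → Ω → ℝ) (hmeas : ∀ p, Measurable (X p))
    (m : ℕ) (hstat : IsStationaryField μ X) (hdep : IsMDependent μ X m)
    (α : ℝ) (hα1 : 2 ≤ α) (hreg : IsRegVarying μ X α)
    (a : ℕ → ℝ) (ha : IsNormSeq μ X a)
    (η κ : ℝ)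
    (hη1 : 2 / 3 < η) (hκ : η < κ) :
    Tendsto
      (fun n : ℕ => μ {ω | ∃ i ∈ Finset.Icc 1 (kseq η n), ∃ j ∈ Finset.Icc 1 (kseq η n),
          ∃ l ∈ Finset.Icc 1 (kseq η n), j ≠ l ∧
          blockExceed X (a (n ^ 2)) (rseq η n) i j ((a (n ^ 2)) ^ ((κ - 1) / 2)) ω ∧
          blockExceed X (a (n ^ 2)) (rseq η n) i l ((a (n ^ 2)) ^ ((κ - 1) / 2)) ω})
      (atTop ⊓ Filter.principal (goodSet η)) (nhds 0) ∧
    Tendsto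
      (fun n : ℕ => μ {ω | ∃ i ∈ Finset.Icc 1 (kseq η n),
          blockExceed X (a (n ^ 2)) (rseq η n) i i ((a (n ^ 2)) ^ ((κ - 1) / 2)) ω})
      (atTop ⊓ Filter.principal (goodSet η)) (nhds 0) := by
  have hb : ∀ᶠ n in atTop, 0 < a (n ^ 2) :=
    (ha.1.comp (tendsto_pow_atTop two_ne_zero)).eventually_gt_atTop 0
  -- the threshold is `ε̃_n b_n = b_n ^ ((κ + 1) / 2)`
  have hc : Tendsto (fun n : ℕ => Real.log (tailProb μ X (a (n ^ 2) ^ ((κ - 1) / 2) * a (n ^ 2))) /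
      Real.log n) atTop (𝓝 (-(2 * ((κ + 1) / 2)))) := by
    refine (hreg.tendsto_log_tailProb_rpow_div_log (by linarith) ha (by linarith)).congr' ?_
    filter_upwards [hb] with n hn
    rw [show (κ + 1) / 2 = (κ - 1) / 2 + 1 by ring, Real.rpow_add_one hn.ne']
  exact ⟨tendsto_measure_twoExceedingBlocks hstat hmeas hdep hb hc (by linarith) (by linarith)
      (by linarith),
    tendsto_measure_diagExceedingBlock hstat hmeas hb hc (by linarith) (by linarith)⟩

/-- Lemma 4.8 of the paper: with the second truncation level
`ε̃_n = b_n^{(κ-1)/2}`, with probability tending to 1 (along the `n` for which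
`n^{1-η}` and `n^η` are integers) there is at most one `ε̃_n`-exceeding block in each
row of blocks, and none on the diagonal. -/
theorem stmt7 {Ω : Type*} [MeasurableSpace Ω] (μ : Measure Ω) [IsProbabilityMeasure μ]
    (X : ℤ × ℤ → Ω → ℝ) (hmeas : ∀ p, Measurable (X p))
    (m : ℕ) (hstat : IsStationaryField μ X) (hdep : IsMDependent μ X m)
    (α : ℝ) (hα1 : 2 ≤ α) (hα2 : α < 4) (hreg : IsRegVarying μ X α)
    (a : ℕ → ℝ) (ha : IsNormSeq μ X a)
    (β η κ : ℝ)
    (hβ1 : 4 / (3 * α) < β) (hβ2 : β < 2 * (8 - α) / (α * (10 - α)))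
    (hη1 : 2 / 3 < η) (hη2 : η < 1) (hη3 : α * β - 1 < η) (hκ : η < κ) :
    Tendsto
      (fun n : ℕ => μ {ω | ∃ i ∈ Finset.Icc 1 (kseq η n), ∃ j ∈ Finset.Icc 1 (kseq η n),
          ∃ l ∈ Finset.Icc 1 (kseq η n), j ≠ l ∧
          blockExceed X (a (n ^ 2)) (rseq η n) i j ((a (n ^ 2)) ^ ((κ - 1) / 2)) ω ∧
          blockExceed X (a (n ^ 2)) (rseq η n) i l ((a (n ^ 2)) ^ ((κ - 1) / 2)) ω})
      (atTop ⊓ Filter.principal (goodSet η)) (nhds 0) ∧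
    Tendsto
      (fun n : ℕ => μ {ω | ∃ i ∈ Finset.Icc 1 (kseq η n),
          blockExceed X (a (n ^ 2)) (rseq η n) i i ((a (n ^ 2)) ^ ((κ - 1) / 2)) ω})
      (atTop ⊓ Filter.principal (goodSet η)) (nhds 0) :=
  stmt7_general μ X hmeas m hstat hdep α hα1 hreg a ha η κ hη1 hκ

end
end

section
/- Let (X_{ij})_{i,j∈ℤ} be a stationary m-dependent random field that is regularly varying with index α∈(0,2), let (p_n) be positive integers with p_n/n → γ ∈ (0,∞), and let A_n := (X_{ij}/a_{n·p_n})_{1≤i≤p_n, 1≤j≤n}. Then for every δ>0, lim_{ε→0⁺} limsup_{n→∞} ℙ(‖A_n^{<ε}·(A_n^{>ε})ᵀ‖ > δ) = 0. -/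
open MeasureTheory ProbabilityTheory Filter Matrix

noncomputable section

/-!
Cauchy–Schwarz gives `‖B Cᵀ‖² ≤ ‖B‖_F² ‖C‖_F²`, and `‖A^{>ε}‖_F ≤ ‖A‖_F`. Off the event that
some entry of `A` exceeds `c` (probability `≈ c^{-α}`), `‖A‖_F²` is the sum of the squared
entries truncated at `c`. By Markov's inequality and the Karamata-type bound
`𝔼[X² 1{|X| ≤ u}] = O(u² ℙ(|X| > u))`, which holds because `α < 2`, the events
`‖A‖_F² > t` and `‖A^{<ε}‖_F² > δ²/t` then have probabilities of order `c^{2-α}/t` and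
`ε^{2-α} t/δ²`. Let `ε → 0`, then `t → ∞`, then `c → ∞`.
-/

open scoped ENNReal Topology

def frobSq {p q : ℕ} (M : Matrix (Fin p) (Fin q) ℝ) : ℝ := ∑ i, ∑ j, M i j ^ 2

lemma frobSq_nonneg {p q : ℕ} (M : Matrix (Fin p) (Fin q) ℝ) : 0 ≤ frobSq M := by
  unfold frobSq; positivity

lemma specNorm_le_sqrt_frobSq {p q : ℕ} (M : Matrix (Fin p) (Fin q) ℝ) :
    specNorm M ≤ √(frobSq M) := by
  refine ContinuousLinearMap.opNorm_le_bound _ (Real.sqrt_nonneg _) fun x => ?_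
  have hrow : ∀ i, (M *ᵥ x) i ^ 2 ≤ (∑ j, M i j ^ 2) * ∑ j, x j ^ 2 := fun i => by
    simpa only [Matrix.mulVec, dotProduct] using Finset.sum_mul_sq_le_sq_mul_sq _ _ _
  rw [LinearMap.coe_toContinuousLinearMap', Matrix.toLpLin_apply, EuclideanSpace.norm_eq,
    EuclideanSpace.norm_eq, ← Real.sqrt_mul (frobSq_nonneg M)]
  refine Real.sqrt_le_sqrt ?_
  simp only [Real.norm_eq_abs, sq_abs, frobSq]
  rw [Finset.sum_mul]
  exact Finset.sum_le_sum fun i _ => hrow i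

lemma frobSq_mul_transpose_le {p q r : ℕ} (B : Matrix (Fin p) (Fin q) ℝ)
    (C : Matrix (Fin r) (Fin q) ℝ) : frobSq (B * Cᵀ) ≤ frobSq B * frobSq C := by
  unfold frobSq
  rw [Finset.sum_mul_sum]
  gcongr with i _ k _
  simpa only [Matrix.mul_apply, Matrix.transpose_apply] using
    Finset.sum_mul_sq_le_sq_mul_sq _ (B i) (C k)

lemma specNorm_mul_transpose_sq_le {p q r : ℕ} (B : Matrix (Fin p) (Fin q) ℝ)
    (C : Matrix (Fin r) (Fin q) ℝ) : specNorm (B * Cᵀ) ^ 2 ≤ frobSq B * frobSq C :=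
  calc specNorm (B * Cᵀ) ^ 2 ≤ √(frobSq (B * Cᵀ)) ^ 2 := by
        gcongr
        exacts [norm_nonneg _, specNorm_le_sqrt_frobSq _]
    _ = frobSq (B * Cᵀ) := Real.sq_sqrt (frobSq_nonneg _)
    _ ≤ frobSq B * frobSq C := frobSq_mul_transpose_le B C

def truncSq (u y : ℝ) : ℝ := if |y| ≤ u then y ^ 2 else 0

lemma truncSq_nonneg (u y : ℝ) : 0 ≤ truncSq u y := by
  unfold truncSq; split <;> positivity

lemma truncSq_le_sq (u y : ℝ) : truncSq u y ≤ u ^ 2 := by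
  unfold truncSq
  split
  · exact sq_le_sq' (abs_le.mp ‹_›).1 (abs_le.mp ‹_›).2
  · positivity

lemma measurable_truncSq (u : ℝ) : Measurable (truncSq u) :=
  Measurable.ite (measurableSet_le (by fun_prop) measurable_const) (by fun_prop) measurable_const

lemma truncSq_div {A : ℝ} (hA : 0 < A) (u y : ℝ) :
    truncSq u (y / A) = truncSq (u * A) y / A ^ 2 := by
  simp only [truncSq, abs_div, abs_of_pos hA, div_le_iff₀ hA, div_pow]
  split <;> simp

lemma sq_truncLe_apply {p q : ℕ} (M : Matrix (Fin p) (Fin q) ℝ) (ε : ℝ) (i : Fin p) (j : Fin q) :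
    truncLe M ε i j ^ 2 = truncSq ε (M i j) := by
  simp only [truncLe, truncGt, truncSq, Matrix.sub_apply, Matrix.of_apply]
  by_cases h : ε < |M i j|
  · simp [h, not_le.mpr h]
  · simp [h, not_lt.mp h]

lemma frobSq_truncLe {p q : ℕ} (M : Matrix (Fin p) (Fin q) ℝ) (ε : ℝ) :
    frobSq (truncLe M ε) = ∑ i, ∑ j, truncSq ε (M i j) := by
  simp only [frobSq, sq_truncLe_apply]

lemma frobSq_truncGt_le {p q : ℕ} {M : Matrix (Fin p) (Fin q) ℝ} {c : ℝ}
    (hM : ∀ i j, |M i j| ≤ c) (ε : ℝ) :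
    frobSq (truncGt M ε) ≤ ∑ i, ∑ j, truncSq c (M i j) := by
  unfold frobSq
  gcongr with i _ j _
  simp only [truncGt, truncSq, Matrix.of_apply, if_pos (hM i j)]
  split <;> simp [sq_nonneg]

lemma exists_lt_abs_or_lt_sum_truncSq_of_lt_specNorm {p q : ℕ} {M : Matrix (Fin p) (Fin q) ℝ}
    {δ ε c t : ℝ} (hδ : 0 ≤ δ) (ht : 0 < t) (h : δ < specNorm (truncLe M ε * (truncGt M ε)ᵀ)) :
    (∃ i j, c < |M i j|) ∨ t < ∑ i, ∑ j, truncSq c (M i j) ∨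
      δ ^ 2 / t < ∑ i, ∑ j, truncSq ε (M i j) := by
  by_contra! hM
  obtain ⟨hbdd, hc, hε⟩ := hM
  have hLe : frobSq (truncLe M ε) ≤ δ ^ 2 / t := (frobSq_truncLe M ε).trans_le hε
  have hGt : frobSq (truncGt M ε) ≤ t := (frobSq_truncGt_le hbdd ε).trans hc
  have : specNorm (truncLe M ε * (truncGt M ε)ᵀ) ^ 2 ≤ δ ^ 2 :=
    calc _ ≤ frobSq (truncLe M ε) * frobSq (truncGt M ε) := specNorm_mul_transpose_sq_le _ _
      _ ≤ δ ^ 2 / t * t := mul_le_mul hLe hGt (frobSq_nonneg _) (by positivity)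
      _ = δ ^ 2 := div_mul_cancel₀ _ ht.ne'
  nlinarith

lemma ENNReal.natCast_mul_ofReal_div_ofReal (N : ℕ) (z : ℝ) {s : ℝ} (hs : 0 < s) :
    (N : ℝ≥0∞) * ENNReal.ofReal z / ENNReal.ofReal s = ENNReal.ofReal (N * z / s) := by
  rw [ENNReal.ofReal_div_of_pos hs, ENNReal.ofReal_mul (Nat.cast_nonneg N),
    ENNReal.ofReal_natCast]

section IdenticallyDistributed

variable {Ω ι : Type*} [MeasurableSpace Ω] [Fintype ι] {μ : Measure Ω} {ν : Measure ℝ}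
  {Y : ι → Ω → ℝ}

lemma measure_exists_mem_le (hY : ∀ k, Measurable (Y k)) (hlaw : ∀ k, μ.map (Y k) = ν)
    {S : Set ℝ} (hS : MeasurableSet S) :
    μ {ω | ∃ k, Y k ω ∈ S} ≤ Fintype.card ι * ν S := by
  have hset : {ω | ∃ k, Y k ω ∈ S} = ⋃ k, Y k ⁻¹' S := by ext; simp
  calc μ {ω | ∃ k, Y k ω ∈ S} ≤ ∑ k, μ (Y k ⁻¹' S) :=
        hset ▸ measure_iUnion_fintype_le μ _
    _ = Fintype.card ι * ν S := by simp [← Measure.map_apply (hY _) hS, hlaw]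

lemma measure_lt_sum_le (hY : ∀ k, Measurable (Y k)) (hlaw : ∀ k, μ.map (Y k) = ν)
    {f : ℝ → ℝ} (hf : Measurable f) (hf0 : ∀ y, 0 ≤ f y) {s : ℝ} (hs : 0 < s) :
    μ {ω | s < ∑ k, f (Y k ω)} ≤
      Fintype.card ι * (∫⁻ y, ENNReal.ofReal (f y) ∂ν) / ENNReal.ofReal s := by
  have hmeas : ∀ k, Measurable fun ω => ENNReal.ofReal (f (Y k ω)) :=
    fun k => (hf.comp (hY k)).ennreal_ofReal
  have hk : ∀ k, ∫⁻ ω, ENNReal.ofReal (f (Y k ω)) ∂μ = ∫⁻ y, ENNReal.ofReal (f y) ∂ν :=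
    fun k => by rw [← hlaw k, lintegral_map hf.ennreal_ofReal (hY k)]
  calc μ {ω | s < ∑ k, f (Y k ω)}
      ≤ μ {ω | ENNReal.ofReal s ≤ ∑ k, ENNReal.ofReal (f (Y k ω))} := by
        refine measure_mono fun ω hω => ?_
        rw [Set.mem_ofPred_eq, ← ENNReal.ofReal_sum_of_nonneg fun k _ => hf0 _]
        exact ENNReal.ofReal_le_ofReal (le_of_lt hω)
    _ ≤ (∫⁻ ω, ∑ k, ENNReal.ofReal (f (Y k ω)) ∂μ) / ENNReal.ofReal s :=
        meas_ge_le_lintegral_div (Finset.measurable_sum _ fun k _ => hmeas k).aemeasurable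
          (by simpa using hs) ENNReal.ofReal_ne_top
    _ = Fintype.card ι * (∫⁻ y, ENNReal.ofReal (f y) ∂ν) / ENNReal.ofReal s := by
        simp [lintegral_finsetSum _ fun k _ => hmeas k, hk]

end IdenticallyDistributed

lemma measurableSet_lt_abs (x : ℝ) : MeasurableSet {y : ℝ | x < |y|} :=
  measurableSet_lt measurable_const (by fun_prop)

lemma ofReal_truncSq_le_add_indicator {u v : ℝ} (hvu : v ≤ u) (y : ℝ) :
    ENNReal.ofReal (truncSq u y) ≤ ENNReal.ofReal (truncSq v y) +
      {y | v < |y|}.indicator (fun _ => ENNReal.ofReal (u ^ 2)) y := by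
  by_cases hy : v < |y|
  · rw [Set.indicator_of_mem (show y ∈ {y | v < |y|} from hy)]
    exact (ENNReal.ofReal_le_ofReal (truncSq_le_sq u y)).trans le_add_self
  · have hy' : |y| ≤ v := not_lt.mp hy
    simp [truncSq, hy, hy', hy'.trans hvu]

def sqTail (ν : Measure ℝ) (x : ℝ) : ℝ := x ^ 2 * ν.real {y | x < |y|}

section TruncatedSecondMoment

variable (ν : Measure ℝ)

lemma lintegral_truncSq_le_sq [IsProbabilityMeasure ν] (u : ℝ) :
    ∫⁻ y, ENNReal.ofReal (truncSq u y) ∂ν ≤ ENNReal.ofReal (u ^ 2) :=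
  (lintegral_mono fun y => ENNReal.ofReal_le_ofReal (truncSq_le_sq u y)).trans_eq (by simp)

lemma lintegral_truncSq_le_add [IsFiniteMeasure ν] {u v : ℝ} (hvu : v ≤ u) :
    ∫⁻ y, ENNReal.ofReal (truncSq u y) ∂ν ≤
      ∫⁻ y, ENNReal.ofReal (truncSq v y) ∂ν + ENNReal.ofReal (u ^ 2 * ν.real {y | v < |y|}) := by
  rw [ENNReal.ofReal_mul (sq_nonneg u), measureReal_def,
    ENNReal.ofReal_toReal (measure_ne_top _ _),
    ← lintegral_indicator_const (measurableSet_lt_abs v)]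
  exact (lintegral_mono (ofReal_truncSq_le_add_indicator hvu)).trans_eq
    (lintegral_add_left (measurable_truncSq v).ennreal_ofReal _)

lemma lintegral_truncSq_le_sqTail_of_le [IsProbabilityMeasure ν] {K u v : ℝ} (hK0 : 0 ≤ K)
    (hK : 1 ≤ K * ν.real {y | v < |y|}) (huv : u ≤ v) :
    ∫⁻ y, ENNReal.ofReal (truncSq u y) ∂ν ≤ ENNReal.ofReal (K * sqTail ν u) := by
  have hanti : ν.real {y | v < |y|} ≤ ν.real {y | u < |y|} :=
    measureReal_mono fun y hy => lt_of_le_of_lt huv hy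
  have hKu : 1 ≤ K * ν.real {y | u < |y|} := hK.trans (mul_le_mul_of_nonneg_left hanti hK0)
  refine (lintegral_truncSq_le_sq ν u).trans (ENNReal.ofReal_le_ofReal ?_)
  unfold sqTail
  nlinarith [mul_le_mul_of_nonneg_left hKu (sq_nonneg u)]

lemma lintegral_truncSq_le_sqTail_of_half [IsFiniteMeasure ν] {K lam u : ℝ} (hK0 : 0 ≤ K)
    (hK : 4 ≤ K * (lam - 1)) (hu : 0 ≤ u) (hdouble : lam * sqTail ν (u / 2) ≤ sqTail ν u)
    (hhalf : ∫⁻ y, ENNReal.ofReal (truncSq (u / 2) y) ∂ν ≤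
      ENNReal.ofReal (K * sqTail ν (u / 2))) :
    ∫⁻ y, ENNReal.ofReal (truncSq u y) ∂ν ≤ ENNReal.ofReal (K * sqTail ν u) := by
  have hg : 0 ≤ sqTail ν (u / 2) := by unfold sqTail; positivity
  calc ∫⁻ y, ENNReal.ofReal (truncSq u y) ∂ν
      ≤ ENNReal.ofReal (K * sqTail ν (u / 2)) + ENNReal.ofReal (4 * sqTail ν (u / 2)) := by
        refine (lintegral_truncSq_le_add ν (v := u / 2) (by linarith)).trans
          (add_le_add hhalf (le_of_eq ?_))
        unfold sqTail; ring_nf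
    _ = ENNReal.ofReal ((K + 4) * sqTail ν (u / 2)) := by
        rw [← ENNReal.ofReal_add (by positivity) (by positivity), add_mul]
    _ ≤ ENNReal.ofReal (K * sqTail ν u) := by
        refine ENNReal.ofReal_le_ofReal ?_
        nlinarith [mul_le_mul_of_nonneg_right hK hg, mul_le_mul_of_nonneg_left hdouble hK0]

lemma exists_lintegral_truncSq_le_of_doubling [IsProbabilityMeasure ν] {x₀ lam : ℝ}
    (hx₀ : 0 < x₀) (hlam : 1 < lam) (htail : 0 < ν.real {y | 2 * x₀ < |y|})
    (hdouble : ∀ x, x₀ ≤ x → lam * sqTail ν x ≤ sqTail ν (2 * x)) :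
    ∃ K ≥ 0, ∀ u, x₀ ≤ u →
      ∫⁻ y, ENNReal.ofReal (truncSq u y) ∂ν ≤ ENNReal.ofReal (K * sqTail ν u) := by
  -- the first term makes the dyadic induction step close, the second one its base `u ≤ 2 x₀`
  set K := max (4 / (lam - 1)) (ν.real {y | 2 * x₀ < |y|})⁻¹
  have hK0 : 0 ≤ K := (inv_pos.mpr htail).le.trans (le_max_right _ _)
  have hK4 : 4 ≤ K * (lam - 1) := (div_le_iff₀ (by linarith)).mp (le_max_left _ _)
  have hKtail : 1 ≤ K * ν.real {y | 2 * x₀ < |y|} :=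
    (inv_le_iff_one_le_mul₀ htail).mp (le_max_right _ _)
  refine ⟨K, hK0, fun u hu => ?_⟩
  obtain ⟨n, hn⟩ : ∃ n : ℕ, u ≤ 2 ^ n * x₀ := by
    obtain ⟨n, hn⟩ := pow_unbounded_of_one_lt (u / x₀) one_lt_two
    exact ⟨n, by rw [div_lt_iff₀ hx₀] at hn; linarith⟩
  induction n generalizing u with
  | zero => exact lintegral_truncSq_le_sqTail_of_le ν hK0 hKtail (by linarith)
  | succ n ih =>
    rcases le_or_gt u (2 * x₀) with hu2 | hu2
    · exact lintegral_truncSq_le_sqTail_of_le ν hK0 hKtail hu2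
    · refine lintegral_truncSq_le_sqTail_of_half ν hK0 hK4 (by linarith) ?_
        (ih (u / 2) (by linarith) (by rw [pow_succ] at hn; linarith))
      simpa only [mul_div_cancel₀ u two_ne_zero] using hdouble (u / 2) (by linarith)

end TruncatedSecondMoment

lemma SlowlyVarying.exists_doubling {L : ℝ → ℝ} (hL : SlowlyVarying L) {β : ℝ} (hβ : 0 < β) :
    ∃ x₀ > 0, ∃ lam > 1, ∀ x, x₀ ≤ x →
      lam * (x ^ β * L x) ≤ (2 * x) ^ β * L (2 * x) := by
  -- any `lam` strictly between `1` and `2 ^ β` works, because `L (2 x) / L x → 1`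
  set τ : ℝ := 2 ^ β
  have hτ : 1 < τ := Real.one_lt_rpow one_lt_two hβ
  have hratio : ∀ᶠ x in atTop, (1 + τ) / 2 / τ < L (2 * x) / L x :=
    (hL.2 2 two_pos).eventually
      (eventually_gt_nhds ((div_lt_one (by linarith)).mpr (by linarith)))
  obtain ⟨x₀, hx₀⟩ := (hratio.and (eventually_gt_atTop 0)).exists_forall_of_atTop
  refine ⟨max x₀ 1, by positivity, (1 + τ) / 2, by linarith, fun x hx => ?_⟩
  obtain ⟨hLx, hx0⟩ := hx₀ x (le_of_max_le_left hx)
  have hL0 := hL.1 x hx0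
  rw [div_lt_div_iff₀ (by linarith) hL0] at hLx
  rw [Real.mul_rpow zero_le_two hx0.le]
  nlinarith [Real.rpow_pos_of_pos hx0 β]

section RandomField

variable {Ω : Type*} [MeasurableSpace Ω] {μ : Measure Ω} {X : ℤ × ℤ → Ω → ℝ}

lemma IsStationaryField.map_eq (hstat : IsStationaryField μ X) (hmeas : ∀ q, Measurable (X q))
    (q : ℤ × ℤ) : μ.map (X q) = μ.map (X (0, 0)) := by
  have hfield : ∀ a b : ℤ, Measurable fun ω (r : ℤ × ℤ) => X (r.1 + a, r.2 + b) ω :=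
    fun a b => measurable_pi_lambda _ fun r => hmeas _
  have h := congrArg (Measure.map fun f : ℤ × ℤ → ℝ => f (0, 0)) (hstat q.1 q.2)
  rw [Measure.map_map (measurable_pi_apply _) (hfield q.1 q.2),
    Measure.map_map (measurable_pi_apply _) (by simpa using hfield 0 0)] at h
  simpa [Function.comp_def] using h

lemma IsRegVarying.tail_pos {α : ℝ} (hreg : IsRegVarying μ X α) {x : ℝ} (hx : 0 < x) :
    0 < μ.real {ω | x < |X (0, 0) ω|} := by
  obtain ⟨L, hL, hGL⟩ := hreg
  rw [measureReal_def, hGL x hx]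
  exact mul_pos (Real.rpow_pos_of_pos hx _) (hL.1 x hx)

lemma IsRegVarying.exists_doubling {α : ℝ} (hreg : IsRegVarying μ X α) (hα : α < 2) :
    ∃ x₀ > 0, ∃ lam > 1, ∀ x, x₀ ≤ x →
      lam * (x ^ 2 * μ.real {ω | x < |X (0, 0) ω|}) ≤
        (2 * x) ^ 2 * μ.real {ω | 2 * x < |X (0, 0) ω|} := by
  obtain ⟨L, hL, hGL⟩ := hreg
  have hsq_tail : ∀ x, 0 < x →
      x ^ 2 * μ.real {ω | x < |X (0, 0) ω|} = x ^ (2 - α) * L x := by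
    intro x hx
    rw [measureReal_def, hGL x hx, Real.rpow_sub hx, Real.rpow_neg hx.le, Real.rpow_two]
    ring
  obtain ⟨x₀, hx₀, lam, hlam, hdouble⟩ := hL.exists_doubling (sub_pos.mpr hα)
  refine ⟨x₀, hx₀, lam, hlam, fun x hx => ?_⟩
  rw [hsq_tail x (by linarith), hsq_tail (2 * x) (by linarith)]
  exact hdouble x hx

lemma IsNormSeq.tendsto_mul_tail_const_mul {α : ℝ} {a : ℕ → ℝ} (ha : IsNormSeq μ X a)
    (hreg : IsRegVarying μ X α) {c : ℝ} (hc : 0 < c) :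
    Tendsto (fun N : ℕ => N * μ.real {ω | c * a N < |X (0, 0) ω|}) atTop
      (𝓝 (c ^ (-α))) := by
  obtain ⟨L, hL, hGL⟩ := hreg
  have hratio : Tendsto (fun N => L (c * a N) / L (a N)) atTop (𝓝 1) := (hL.2 c hc).comp ha.1
  have hlim := ha.2.mul (hratio.const_mul (c ^ (-α)))
  rw [mul_one, one_mul] at hlim
  refine hlim.congr' ?_
  filter_upwards [ha.1.eventually_gt_atTop 0] with N hN
  have hL0 := (hL.1 _ hN).ne'
  rw [measureReal_def, hGL _ hN, hGL _ (mul_pos hc hN), Real.mul_rpow hc.le hN.le]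
  field_simp

def crossNormGt (X : ℤ × ℤ → Ω → ℝ) (A ε δ : ℝ) (p n : ℕ) : Set Ω :=
  {ω | δ < specNorm (truncLe (dataMat X A p n ω) ε * (truncGt (dataMat X A p n ω) ε)ᵀ)}

lemma lintegral_truncSq_div_le {ν : Measure ℝ} {x₀ K : ℝ}
    (hK : ∀ u, x₀ ≤ u →
      ∫⁻ y, ENNReal.ofReal (truncSq u y) ∂ν ≤ ENNReal.ofReal (K * sqTail ν u))
    {A c : ℝ} (hA : 0 < A) (hcA : x₀ ≤ c * A) :
    ∫⁻ y, ENNReal.ofReal (truncSq c (y / A)) ∂ν ≤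
      ENNReal.ofReal (K * c ^ 2 * ν.real {y | c * A < |y|}) := by
  have hA2 : 0 < A ^ 2 := by positivity
  simp_rw [truncSq_div hA, ENNReal.ofReal_div_of_pos hA2, div_eq_mul_inv]
  rw [lintegral_mul_const' _ _ (by simpa using hA.ne'), ← div_eq_mul_inv,
    ENNReal.div_le_iff (by simpa using hA.ne') ENNReal.ofReal_ne_top,
    ← ENNReal.ofReal_mul' hA2.le]
  refine (hK _ hcA).trans_eq (congrArg ENNReal.ofReal ?_)
  unfold sqTail
  ring

lemma measure_crossNormGt_le {ν : Measure ℝ} (hmeas : ∀ q, Measurable (X q))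
    (hlaw : ∀ q, μ.map (X q) = ν) {A c ε δ t : ℝ} (hδ : 0 < δ) (ht : 0 < t) (p n : ℕ) :
    μ (crossNormGt X A ε δ p n) ≤
      (p * n : ℕ) * ν {y | c < |y / A|} +
        (p * n : ℕ) * (∫⁻ y, ENNReal.ofReal (truncSq c (y / A)) ∂ν) / ENNReal.ofReal t +
        (p * n : ℕ) * (∫⁻ y, ENNReal.ofReal (truncSq ε (y / A)) ∂ν) /
          ENNReal.ofReal (δ ^ 2 / t) := by
  set Y : Fin p × Fin n → Ω → ℝ := fun k => X (((k.1 : ℕ) + 1 : ℤ), ((k.2 : ℕ) + 1 : ℤ))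
  have hY : ∀ k, Measurable (Y k) := fun k => hmeas _
  have hlawY : ∀ k, μ.map (Y k) = ν := fun k => hlaw _
  have hcard : (Fintype.card (Fin p × Fin n) : ℝ≥0∞) = (p * n : ℕ) := by simp
  have hsub : crossNormGt X A ε δ p n ⊆
      {ω | ∃ k, Y k ω ∈ {y | c < |y / A|}} ∪ {ω | t < ∑ k, truncSq c (Y k ω / A)} ∪
        {ω | δ ^ 2 / t < ∑ k, truncSq ε (Y k ω / A)} := fun ω hω => by
    simpa [Fintype.sum_prod_type, dataMat, Y, or_assoc] using
      exists_lt_abs_or_lt_sum_truncSq_of_lt_specNorm (c := c) hδ.le ht hω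
  calc _ ≤ _ := measure_mono hsub
    _ ≤ _ := measure_union_le _ _
    _ ≤ _ := add_le_add (measure_union_le _ _) le_rfl
    _ ≤ _ := by
      rw [← hcard]
      gcongr
      · exact measure_exists_mem_le hY hlawY (measurableSet_lt measurable_const (by fun_prop))
      · exact measure_lt_sum_le hY hlawY ((measurable_truncSq c).comp (by fun_prop))
          (fun y => truncSq_nonneg _ _) ht
      · exact measure_lt_sum_le hY hlawY ((measurable_truncSq ε).comp (by fun_prop))
          (fun y => truncSq_nonneg _ _) (by positivity)

lemma measure_crossNormGt_le_ofReal {ν : Measure ℝ} [IsFiniteMeasure ν]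
    (hmeas : ∀ q, Measurable (X q)) (hlaw : ∀ q, μ.map (X q) = ν) {x₀ K : ℝ} (hK0 : 0 ≤ K)
    (hK : ∀ u, x₀ ≤ u →
      ∫⁻ y, ENNReal.ofReal (truncSq u y) ∂ν ≤ ENNReal.ofReal (K * sqTail ν u))
    {A c ε δ t : ℝ} (hA : 0 < A) (hcA : x₀ ≤ c * A) (hεA : x₀ ≤ ε * A) (hδ : 0 < δ)
    (ht : 0 < t) (p n : ℕ) :
    μ (crossNormGt X A ε δ p n) ≤
      ENNReal.ofReal ((p * n : ℕ) * ν.real {y | c * A < |y|} +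
        (p * n : ℕ) * (K * c ^ 2 * ν.real {y | c * A < |y|}) / t +
        (p * n : ℕ) * (K * ε ^ 2 * ν.real {y | ε * A < |y|}) / (δ ^ 2 / t)) := by
  have hset : {y : ℝ | c < |y / A|} = {y | c * A < |y|} := by
    ext y; simp [abs_div, abs_of_pos hA, lt_div_iff₀ hA]
  have hδt : 0 < δ ^ 2 / t := by positivity
  refine (measure_crossNormGt_le (c := c) hmeas hlaw hδ ht p n).trans ?_
  rw [hset, ENNReal.ofReal_add (by positivity) (by positivity),
    ENNReal.ofReal_add (by positivity) (by positivity),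
    ← ENNReal.natCast_mul_ofReal_div_ofReal _ _ ht,
    ← ENNReal.natCast_mul_ofReal_div_ofReal _ _ hδt, ENNReal.ofReal_mul (Nat.cast_nonneg _),
    ENNReal.ofReal_natCast, measureReal_def, ENNReal.ofReal_toReal (measure_ne_top _ _)]
  gcongr
  · exact lintegral_truncSq_div_le hK hA hcA
  · exact lintegral_truncSq_div_le hK hA hεA

lemma limsup_measure_crossNormGt_le {ν : Measure ℝ} [IsFiniteMeasure ν]
    (hmeas : ∀ q, Measurable (X q)) (hlaw : ∀ q, μ.map (X q) = ν) {x₀ K : ℝ} (hK0 : 0 ≤ K)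
    (hK : ∀ u, x₀ ≤ u →
      ∫⁻ y, ENNReal.ofReal (truncSq u y) ∂ν ≤ ENNReal.ofReal (K * sqTail ν u))
    {a : ℕ → ℝ} (ha : Tendsto a atTop atTop) {α : ℝ}
    (htail : ∀ d > 0,
      Tendsto (fun N : ℕ => N * ν.real {y | d * a N < |y|}) atTop (𝓝 (d ^ (-α))))
    {p : ℕ → ℕ} (hp : Tendsto (fun n => n * p n) atTop atTop)
    {c ε δ t : ℝ} (hc : 0 < c) (hε : 0 < ε) (hδ : 0 < δ) (ht : 0 < t) :
    limsup (fun n => μ (crossNormGt X (a (n * p n)) ε δ (p n) n)) atTop ≤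
      ENNReal.ofReal (c ^ (-α) + K * c ^ 2 * c ^ (-α) / t +
        K * ε ^ 2 * ε ^ (-α) / (δ ^ 2 / t)) := by
  set M : ℝ → ℕ → ℝ := fun d n => (n * p n : ℕ) * ν.real {y | d * a (n * p n) < |y|}
  have hM : ∀ d > 0, Tendsto (M d) atTop (𝓝 (d ^ (-α))) := fun d hd => (htail d hd).comp hp
  have hw : Tendsto (fun n => M c n + K * c ^ 2 * M c n / t + K * ε ^ 2 * M ε n / (δ ^ 2 / t))
      atTop (𝓝 (c ^ (-α) + K * c ^ 2 * c ^ (-α) / t +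
        K * ε ^ 2 * ε ^ (-α) / (δ ^ 2 / t))) :=
    ((hM c hc).add (((hM c hc).const_mul _).div_const _)).add
      (((hM ε hε).const_mul _).div_const _)
  have haN := ha.comp hp
  have hbound : ∀ᶠ n in atTop, μ (crossNormGt X (a (n * p n)) ε δ (p n) n) ≤
      ENNReal.ofReal (M c n + K * c ^ 2 * M c n / t + K * ε ^ 2 * M ε n / (δ ^ 2 / t)) := by
    filter_upwards [haN.eventually_gt_atTop 0, haN.eventually_ge_atTop (x₀ / c),
      haN.eventually_ge_atTop (x₀ / ε)] with n hA hcA hεA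
    refine (measure_crossNormGt_le_ofReal hmeas hlaw hK0 hK hA
      ((div_le_iff₀' hc).mp hcA) ((div_le_iff₀' hε).mp hεA) hδ ht (p n) n).trans_eq ?_
    simp only [M, Function.comp_apply, Nat.mul_comm (p n) n]
    ring_nf
  exact (limsup_le_limsup hbound).trans_eq (ENNReal.tendsto_ofReal hw).limsup_eq

end RandomField

lemma tendsto_nhdsGT_zero_of_forall_le {F : ℝ → ℝ≥0∞} {α K δ : ℝ} (hα0 : 0 < α)
    (hα2 : α < 2)
    (hF : ∀ c t ε, 0 < c → 0 < t → 0 < ε →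
      F ε ≤ ENNReal.ofReal (c ^ (-α) + K * c ^ 2 * c ^ (-α) / t +
        K * ε ^ 2 * ε ^ (-α) / (δ ^ 2 / t))) :
    Tendsto F (𝓝[>] 0) (𝓝 0) := by
  rw [ENNReal.tendsto_nhds_zero]
  intro η hη
  obtain ⟨r, -, hr0, hrη⟩ := ENNReal.lt_iff_exists_real_btwn.mp hη
  have hr3 : 0 < r / 3 := by linarith [ENNReal.ofReal_pos.mp hr0]
  obtain ⟨c, hcr, hc⟩ := (((tendsto_rpow_neg_atTop hα0).eventually (gt_mem_nhds hr3)).and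
    (eventually_gt_atTop 0)).exists
  obtain ⟨t, htr, ht⟩ := ((((tendsto_const_nhds (x := K * c ^ 2 * c ^ (-α))).div_atTop
    tendsto_id).eventually (gt_mem_nhds hr3)).and (eventually_gt_atTop 0)).exists
  rw [id_eq] at htr
  have hpow : Tendsto (fun ε : ℝ => ε ^ 2 * ε ^ (-α)) (𝓝[>] 0) (𝓝 0) := by
    have hcont := (Real.continuousAt_rpow_const 0 (2 - α) (Or.inr (by linarith))).tendsto
    rw [Real.zero_rpow (by linarith)] at hcont
    refine (hcont.mono_left nhdsWithin_le_nhds).congr' ?_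
    filter_upwards [self_mem_nhdsWithin] with ε hε
    rw [Real.rpow_sub hε, Real.rpow_neg hε.le, Real.rpow_two, div_eq_mul_inv]
  have hsmall : ∀ᶠ ε in 𝓝[>] 0, K * ε ^ 2 * ε ^ (-α) / (δ ^ 2 / t) < r / 3 := by
    refine ((hpow.const_mul K).div_const (δ ^ 2 / t)).eventually (gt_mem_nhds ?_) |>.mono
      fun ε h => by simpa only [mul_assoc] using h
    simpa using hr3
  filter_upwards [hsmall, self_mem_nhdsWithin] with ε hεr hε
  exact (hF c t ε hc ht hε).trans ((ENNReal.ofReal_le_ofReal (by linarith)).trans hrη.le)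

theorem stmt16_general {Ω : Type*} [MeasurableSpace Ω] (μ : Measure Ω) [IsProbabilityMeasure μ]
    (X : ℤ × ℤ → Ω → ℝ) (hmeas : ∀ p, Measurable (X p))
    (hstat : IsStationaryField μ X)
    (α : ℝ) (hα0 : 0 < α) (hα2 : α < 2) (hreg : IsRegVarying μ X α)
    (a : ℕ → ℝ) (ha : IsNormSeq μ X a)
    (p : ℕ → ℕ) (hp0 : ∀ n, 0 < p n) :
    ∀ δ : ℝ, 0 < δ →
      Tendsto
        (fun ε : ℝ =>
          Filter.limsup
            (fun n : ℕ => μ {ω | δ < specNorm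
                (truncLe (dataMat X (a (n * p n)) (p n) n ω) ε *
                  (truncGt (dataMat X (a (n * p n)) (p n) n ω) ε)ᵀ)})
            atTop)
        (nhdsWithin 0 (Set.Ioi 0)) (nhds 0) := by
  intro δ hδ
  have hlaw := hstat.map_eq hmeas
  have : IsProbabilityMeasure (μ.map (X (0, 0))) :=
    Measure.isProbabilityMeasure_map (hmeas _).aemeasurable
  have hν : ∀ x, (μ.map (X (0, 0))).real {y | x < |y|} = μ.real {ω | x < |X (0, 0) ω|} :=
    fun x => map_measureReal_apply (hmeas _) (measurableSet_lt_abs x)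
  obtain ⟨x₀, hx₀, lam, hlam, hdouble⟩ := hreg.exists_doubling hα2
  obtain ⟨K, hK0, hK⟩ := exists_lintegral_truncSq_le_of_doubling (μ.map (X (0, 0))) hx₀ hlam
    (by simpa only [hν] using hreg.tail_pos (by positivity : 0 < 2 * x₀))
    (by simpa only [sqTail, hν] using hdouble)
  have hN : Tendsto (fun n => n * p n) atTop atTop :=
    tendsto_atTop_mono (fun n => Nat.le_mul_of_pos_right n (hp0 n)) tendsto_id
  exact tendsto_nhdsGT_zero_of_forall_le hα0 hα2 fun c t ε hc ht hε =>
    limsup_measure_crossNormGt_le hmeas hlaw hK0 hK ha.1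
      (fun d hd => by simpa only [hν] using ha.tendsto_mul_tail_const_mul hreg hd) hN hc hε hδ ht

/-- Lemma 5.1 of the paper: for the sample covariance setting with
`α ∈ (0,2)`, `lim_{ε→0⁺} limsup_n ℙ(‖A^{<ε}(A^{>ε})ᵀ‖ > δ) = 0` for every `δ > 0`. -/
theorem stmt16 {Ω : Type*} [MeasurableSpace Ω] (μ : Measure Ω) [IsProbabilityMeasure μ]
    (X : ℤ × ℤ → Ω → ℝ) (hmeas : ∀ p, Measurable (X p))
    (m : ℕ) (hstat : IsStationaryField μ X) (hdep : IsMDependent μ X m)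
    (α : ℝ) (hα0 : 0 < α) (hα2 : α < 2) (hreg : IsRegVarying μ X α)
    (a : ℕ → ℝ) (ha : IsNormSeq μ X a)
    (p : ℕ → ℕ) (hp0 : ∀ n, 0 < p n)
    (γ : ℝ) (hγ : 0 < γ)
    (hp : Tendsto (fun n : ℕ => (p n : ℝ) / (n : ℝ)) atTop (nhds γ)) :
    ∀ δ : ℝ, 0 < δ →
      Tendsto
        (fun ε : ℝ =>
          Filter.limsup
            (fun n : ℕ => μ {ω | δ < specNorm
                (truncLe (dataMat X (a (n * p n)) (p n) n ω) ε *
                  (truncGt (dataMat X (a (n * p n)) (p n) n ω) ε)ᵀ)})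
            atTop)
        (nhdsWithin 0 (Set.Ioi 0)) (nhds 0) :=
  stmt16_general μ X hmeas hstat α hα0 hα2 hreg a ha p hp0
end
end
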